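/- Let S = ℂ[x_0,…,x_{n+1}] and S' = ℂ[x_0',…,x_{n+1}'] be graded polynomial rings with positive weights a_0,…,a_{n+1} and a_0',…,a_{n+1}', and let f ∈ S, f' ∈ S' be nonzero weighted-homogeneous polynomials of degrees d and d' with d > a_i for all i and d' > a_i' for all i. If there exists a graded ℂ-algebra isomorphism ψ : S/(f) → S'/(f'), then the multiset {a_0,…,a_{n+1}} equals the multiset {a_0',…,a_{n+1}'}, d = d', and ψ lifts to a graded ℂ-algebra isomorphism Ψ : S → S' satisfying Ψ(f) = c·f' for some c ∈ ℂ^× and inducing ψ on the quotients. -/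

import Mathlib

/-!
Choose weighted-homogeneous lifts `y i` of `ψ (X i)` and `z i` of `ψ⁻¹ (X i)`. The substitutions
`X ↦ y` and `X ↦ z` are mutually inverse: each composite moves `X i` by a homogeneous element of
`(f)` of degree `a i < d`, which must vanish. The resulting graded isomorphism `Ψ` maps `(f)` onto
`(f')`, so comparing degrees gives `d = d'` and `Ψ f = g * f'` with `g` of degree `0`, a nonzero
constant. Finally, the number of weights equal to `m` is the rank of the degree-`m` part of
`S₊ / S₊²`, which every graded isomorphism preserves.
-/

open MvPolynomial

noncomputable section

def quotPieces {n : ℕ} (a : Fin (n + 2) → ℕ) (f : MvPolynomial (Fin (n + 2)) ℂ) :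
    ℕ → Submodule ℂ (MvPolynomial (Fin (n + 2)) ℂ ⧸ Ideal.span {f}) := fun m =>
  (weightedHomogeneousSubmodule ℂ a m).map
    (Ideal.Quotient.mkₐ ℂ (Ideal.span {f})).toLinearMap

theorem Ideal.mem_iff_map_mem_of_lift {A B : Type*} [CommRing A] [CommRing B] {I : Ideal A}
    {J : Ideal B} (ψ : (A ⧸ I) ≃+* (B ⧸ J)) (Ψ : A → B)
    (hΨψ : ∀ s, ψ (Ideal.Quotient.mk I s) = Ideal.Quotient.mk J (Ψ s)) (s : A) :
    s ∈ I ↔ Ψ s ∈ J := by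
  rw [← Ideal.Quotient.eq_zero_iff_mem, ← Ideal.Quotient.eq_zero_iff_mem, ← hΨψ,
    map_eq_zero_iff ψ ψ.injective]

namespace MvPolynomial

variable {σ τ R M : Type*}

section CommSemiring

variable [CommSemiring R]

theorem IsWeightedHomogeneous.aeval [AddCommMonoid M] {w : σ → M} {w' : τ → M}
    {v : σ → MvPolynomial τ R} (hv : ∀ i, (v i).IsWeightedHomogeneous w' (w i))
    {p : MvPolynomial σ R} {m : M} (hp : p.IsWeightedHomogeneous w m) :
    (aeval v p).IsWeightedHomogeneous w' m := by
  induction hp using IsWeightedHomogeneous.induction_on with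
  | zero => simpa using isWeightedHomogeneous_zero R w' m
  | add p q _ _ hp hq => simpa using hp.add hq
  | monomial e r he =>
    rw [aeval_monomial, ← he, Finsupp.weight_apply, Finsupp.prod, Finsupp.sum,
      ← zero_add (∑ _ ∈ _, _)]
    exact (isWeightedHomogeneous_C w' r).mul
      (IsWeightedHomogeneous.prod _ _ _ fun i _ => (hv i).pow _)

attribute [local instance] weightedGradedAlgebra in
theorem weightedHomogeneousComponent_mul_of_right {w : σ → ℕ} {f : MvPolynomial σ R} {d : ℕ}
    (hf : f.IsWeightedHomogeneous w d) (g : MvPolynomial σ R) (e : ℕ) :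
    weightedHomogeneousComponent w e (g * f) =
      if d ≤ e then weightedHomogeneousComponent w (e - d) g * f else 0 := by
  simp_rw [← weightedDecomposition.decompose'_apply]
  exact DirectSum.coe_decompose_mul_of_right_mem _ e hf

theorem IsWeightedHomogeneous.exists_eq_mul_of_mem_span_singleton {w : σ → ℕ}
    {f h : MvPolynomial σ R} {d e : ℕ} (hh : h.IsWeightedHomogeneous w e)
    (hf : f.IsWeightedHomogeneous w d) (hmem : h ∈ Ideal.span {f}) :
    ∃ g : MvPolynomial σ R, g.IsWeightedHomogeneous w (e - d) ∧ h = g * f := by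
  obtain ⟨g, rfl⟩ := Ideal.mem_span_singleton'.mp hmem
  classical
  rw [← hh.weightedHomogeneousComponent_same, weightedHomogeneousComponent_mul_of_right hf]
  split_ifs
  · exact ⟨_, weightedHomogeneousComponent_isWeightedHomogeneous _ _, rfl⟩
  · exact ⟨0, isWeightedHomogeneous_zero R w _, (zero_mul f).symm⟩

theorem IsWeightedHomogeneous.eq_zero_of_mem_span_singleton {w : σ → ℕ}
    {f h : MvPolynomial σ R} {d e : ℕ} (hh : h.IsWeightedHomogeneous w e)
    (hf : f.IsWeightedHomogeneous w d) (hmem : h ∈ Ideal.span {f}) (he : e < d) : h = 0 := by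
  obtain ⟨g, rfl⟩ := Ideal.mem_span_singleton'.mp hmem
  classical
  rw [← hh.weightedHomogeneousComponent_same, weightedHomogeneousComponent_mul_of_right hf,
    if_neg he.not_ge]

theorem IsWeightedHomogeneous.le_of_mem_span_singleton {w : σ → ℕ} {f h : MvPolynomial σ R}
    {d e : ℕ} (hh : h.IsWeightedHomogeneous w e) (hf : f.IsWeightedHomogeneous w d)
    (hmem : h ∈ Ideal.span {f}) (h0 : h ≠ 0) : d ≤ e :=
  not_lt.mp fun he => h0 (hh.eq_zero_of_mem_span_singleton hf hmem he)

def IsWeightedGradedEquiv [AddCommMonoid M] (w : σ → M) (w' : τ → M)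
    (Ψ : MvPolynomial σ R ≃ₐ[R] MvPolynomial τ R) : Prop :=
  ∀ m, (weightedHomogeneousSubmodule R w m).map Ψ.toLinearMap =
    weightedHomogeneousSubmodule R w' m

namespace IsWeightedGradedEquiv

variable [AddCommMonoid M] {w : σ → M} {w' : τ → M}
  {Ψ : MvPolynomial σ R ≃ₐ[R] MvPolynomial τ R}

theorem of_isWeightedHomogeneous
    (h : ∀ {m p}, IsWeightedHomogeneous w p m → (Ψ p).IsWeightedHomogeneous w' m)
    (h' : ∀ {m q}, IsWeightedHomogeneous w' q m → (Ψ.symm q).IsWeightedHomogeneous w m) :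
    IsWeightedGradedEquiv w w' Ψ := fun _ =>
  le_antisymm (Submodule.map_le_iff_le_comap.mpr fun _ => h)
    fun q hq => ⟨Ψ.symm q, h' hq, Ψ.apply_symm_apply q⟩

theorem isWeightedHomogeneous (hΨ : IsWeightedGradedEquiv w w' Ψ) {p : MvPolynomial σ R}
    {m : M} (hp : p.IsWeightedHomogeneous w m) : (Ψ p).IsWeightedHomogeneous w' m :=
  (mem_weightedHomogeneousSubmodule ..).mp <| hΨ m ▸ Submodule.mem_map_of_mem hp

theorem symm (hΨ : IsWeightedGradedEquiv w w' Ψ) : IsWeightedGradedEquiv w' w Ψ.symm :=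
  fun m => (Submodule.map_symm_eq_iff Ψ.toLinearEquiv).mpr (hΨ m)

end IsWeightedGradedEquiv

end CommSemiring

section CommRing

variable [CommRing R]

theorem eq_id_of_mkₐ_comp_eq {w : σ → ℕ} {f : MvPolynomial σ R} {d : ℕ}
    (hf : f.IsWeightedHomogeneous w d) (hd : ∀ i, w i < d)
    (φ : MvPolynomial σ R →ₐ[R] MvPolynomial σ R)
    (hφ : ∀ i, (φ (X i)).IsWeightedHomogeneous w (w i))
    (hφf : (Ideal.Quotient.mkₐ R (Ideal.span {f})).comp φ =
      Ideal.Quotient.mkₐ R (Ideal.span {f})) :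
    φ = AlgHom.id R _ := by
  refine algHom_ext fun i => sub_eq_zero.mp ?_
  refine ((hφ i).sub (isWeightedHomogeneous_X R w i)).eq_zero_of_mem_span_singleton hf ?_ (hd i)
  rw [← Ideal.Quotient.eq, ← Ideal.Quotient.mkₐ_eq_mk R, ← AlgHom.comp_apply, hφf]

theorem mkₐ_comp_aeval_eq {I : Ideal (MvPolynomial σ R)} {J : Ideal (MvPolynomial τ R)}
    (ψ : (MvPolynomial σ R ⧸ I) →ₐ[R] (MvPolynomial τ R ⧸ J))
    {y : σ → MvPolynomial τ R}
    (hy : ∀ i, Ideal.Quotient.mk J (y i) = ψ (Ideal.Quotient.mk I (X i))) :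
    (Ideal.Quotient.mkₐ R J).comp (aeval y) = ψ.comp (Ideal.Quotient.mkₐ R I) :=
  algHom_ext fun i => by simpa using hy i

theorem exists_isWeightedGradedEquiv_lift {w : σ → ℕ} {w' : τ → ℕ} {f : MvPolynomial σ R}
    {f' : MvPolynomial τ R} {d d' : ℕ} (hf : f.IsWeightedHomogeneous w d) (hd : ∀ i, w i < d)
    (hf' : f'.IsWeightedHomogeneous w' d') (hd' : ∀ i, w' i < d')
    (ψ : (MvPolynomial σ R ⧸ Ideal.span {f}) ≃ₐ[R] (MvPolynomial τ R ⧸ Ideal.span {f'}))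
    (hψ : ∀ i, ∃ y : MvPolynomial τ R, y.IsWeightedHomogeneous w' (w i) ∧
      Ideal.Quotient.mk _ y = ψ (Ideal.Quotient.mk _ (X i)))
    (hψ' : ∀ i, ∃ z : MvPolynomial σ R, z.IsWeightedHomogeneous w (w' i) ∧
      Ideal.Quotient.mk _ z = ψ.symm (Ideal.Quotient.mk _ (X i))) :
    ∃ Ψ : MvPolynomial σ R ≃ₐ[R] MvPolynomial τ R, IsWeightedGradedEquiv w w' Ψ ∧
      ∀ s, ψ (Ideal.Quotient.mk _ s) = Ideal.Quotient.mk _ (Ψ s) := by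
  choose y hy hyψ using hψ
  choose z hz hzψ using hψ'
  have hΨ₀ := mkₐ_comp_aeval_eq ψ.toAlgHom hyψ
  have hΦ₀ := mkₐ_comp_aeval_eq ψ.symm.toAlgHom hzψ
  have hΦΨ : (aeval z).comp (aeval y) = AlgHom.id R _ := by
    refine eq_id_of_mkₐ_comp_eq hf hd _ (fun i => by simpa using (hy i).aeval hz) ?_
    rw [← AlgHom.comp_assoc, hΦ₀, AlgHom.comp_assoc, hΨ₀, ← AlgHom.comp_assoc,
      AlgEquiv.symm_comp, AlgHom.id_comp]
  have hΨΦ : (aeval y).comp (aeval z) = AlgHom.id R _ := by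
    refine eq_id_of_mkₐ_comp_eq hf' hd' _ (fun i => by simpa using (hz i).aeval hy) ?_
    rw [← AlgHom.comp_assoc, hΨ₀, AlgHom.comp_assoc, hΦ₀, ← AlgHom.comp_assoc,
      AlgEquiv.comp_symm, AlgHom.id_comp]
  exact ⟨AlgEquiv.ofAlgHom _ _ hΨΦ hΦΨ, .of_isWeightedHomogeneous (·.aeval hy) (·.aeval hz),
    fun s => (AlgHom.congr_fun hΨ₀ s).symm⟩

theorem IsWeightedGradedEquiv.degree_eq_and_exists_smul {K : Type*} [Field K] {w : σ → ℕ}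
    {w' : τ → ℕ} (hw' : ∀ i, 0 < w' i) {f : MvPolynomial σ K} {f' : MvPolynomial τ K}
    {d d' : ℕ}
    (hf0 : f ≠ 0) (hf : f.IsWeightedHomogeneous w d) (hf' : f'.IsWeightedHomogeneous w' d')
    {Ψ : MvPolynomial σ K ≃ₐ[K] MvPolynomial τ K} (hΨ : IsWeightedGradedEquiv w w' Ψ)
    (hΨf : Ψ f ∈ Ideal.span {f'}) (hΨf' : Ψ.symm f' ∈ Ideal.span {f}) :
    d = d' ∧ ∃ c : Kˣ, Ψ f = (c : K) • f' := by
  have hΨf0 : Ψ f ≠ 0 := (map_ne_zero_iff Ψ Ψ.injective).mpr hf0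
  have hΨfh := hΨ.isWeightedHomogeneous hf
  obtain ⟨g, hg, hgf⟩ := hΨfh.exists_eq_mul_of_mem_span_singleton hf' hΨf
  have hf0' : f' ≠ 0 := right_ne_zero_of_mul (hgf ▸ hΨf0)
  obtain rfl : d = d' := le_antisymm
    ((hΨ.symm.isWeightedHomogeneous hf').le_of_mem_span_singleton hf hΨf'
      ((map_ne_zero_iff _ Ψ.symm.injective).mpr hf0'))
    (hΨfh.le_of_mem_span_singleton hf' hΨf hΨf0)
  rw [Nat.sub_self] at hg
  have hgC : g = C (coeff 0 g) := calc
    g = weightedHomogeneousComponent w' 0 g := hg.weightedHomogeneousComponent_same.symm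
    _ = C (coeff 0 g) := weightedHomogeneousComponent_zero g fun i => (hw' i).ne'
  have hc : coeff 0 g ≠ 0 := fun h0 => hΨf0 (by rw [hgf, hgC, h0, C_0, zero_mul])
  exact ⟨rfl, Units.mk0 _ hc, by rw [Units.val_mk0, smul_eq_C_mul, ← hgC, hgf]⟩

end CommRing

section Indecomposables

variable (R) [CommSemiring R]

/-- `S₊² + ⨁_{k ≠ m} S_k`; the quotient by it is the degree-`m` part of `S₊ / S₊²`. -/
def decomposableOrOffDegree (w : σ → ℕ) (m : ℕ) : Submodule R (MvPolynomial σ R) :=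
  Submodule.span R {p | (∃ (j k : ℕ) (q r : MvPolynomial σ R), 0 < j ∧ 0 < k ∧
    q.IsWeightedHomogeneous w j ∧ r.IsWeightedHomogeneous w k ∧ p = q * r) ∨
    ∃ k ≠ m, p.IsWeightedHomogeneous w k}

def linearCoeffs (w : σ → ℕ) (m : ℕ) : MvPolynomial σ R →ₗ[R] ({i // w i = m} → R) :=
  LinearMap.pi fun i => lcoeff R (Finsupp.single i.1 1)

variable {R}

theorem decomposableOrOffDegree_le_ker_linearCoeffs (w : σ → ℕ) (m : ℕ) :
    decomposableOrOffDegree R w m ≤ LinearMap.ker (linearCoeffs R w m) := by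
  refine Submodule.span_le.mpr ?_
  rintro _ (⟨j, k, q, r, hj, hk, hq, hr, rfl⟩ | ⟨k, hk, hp⟩) <;>
    refine LinearMap.mem_ker.mpr ?_ <;> ext i <;> change coeff _ _ = 0
  · have hq0 : coeff 0 q = 0 := hq.coeff_eq_zero 0 (by simpa using hj.ne)
    have hr0 : coeff 0 r = 0 := hr.coeff_eq_zero 0 (by simpa using hk.ne)
    classical
    rw [coeff_mul, Finsupp.antidiagonal_single]
    simp [Finset.Nat.antidiagonal_succ, hq0, hr0]
  · exact hp.coeff_eq_zero _ (by simpa [Finsupp.weight_single] using i.2.trans_ne hk.symm)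

theorem monomial_mem_decomposableOrOffDegree {w : σ → ℕ} (hw : ∀ i, 0 < w i) {m : ℕ}
    (hm : 0 < m) {e : σ →₀ ℕ} (he : ∀ i, w i = m → e ≠ Finsupp.single i 1) (c : R) :
    monomial e c ∈ decomposableOrOffDegree R w m := by
  refine Submodule.subset_span ?_
  by_cases hwe : Finsupp.weight w e = m
  swap
  · exact Or.inr ⟨_, hwe, isWeightedHomogeneous_monomial w e c rfl⟩
  obtain ⟨i, hi⟩ : ∃ i, e i ≠ 0 := by
    by_contra! h
    rw [show e = 0 from Finsupp.ext h, map_zero] at hwe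
    exact hm.ne hwe
  set e' := e - Finsupp.single i 1
  have hee' : Finsupp.single i 1 + e' = e :=
    add_tsub_cancel_of_le (Finsupp.single_le_iff.mpr (Nat.one_le_iff_ne_zero.mpr hi))
  obtain ⟨j, hj⟩ : ∃ j, e' j ≠ 0 := by
    by_contra! h
    refine he i ?_ ?_
    · rw [← hwe, ← hee', show e' = 0 from Finsupp.ext h, add_zero, Finsupp.weight_single,
        one_smul]
    · rw [← hee', show e' = 0 from Finsupp.ext h, add_zero]
  refine Or.inl ⟨w i, _, X i, monomial e' c, hw i,
    (hw j).trans_le (Finsupp.le_weight_of_ne_zero' w hj), isWeightedHomogeneous_X R w i,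
    isWeightedHomogeneous_monomial w e' c rfl, ?_⟩
  rw [X, monomial_mul, one_mul, hee']

theorem ker_linearCoeffs {w : σ → ℕ} (hw : ∀ i, 0 < w i) {m : ℕ} (hm : 0 < m) :
    LinearMap.ker (linearCoeffs R w m) = decomposableOrOffDegree R w m := by
  refine le_antisymm (fun p hp => ?_) (decomposableOrOffDegree_le_ker_linearCoeffs w m)
  rw [p.as_sum]
  refine Submodule.sum_mem _ fun e _ => ?_
  by_cases he : ∃ i, w i = m ∧ e = Finsupp.single i 1
  · obtain ⟨i, hi, rfl⟩ := he
    have : coeff (Finsupp.single i 1) p = 0 := congr_fun hp ⟨i, hi⟩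
    rw [this, monomial_zero]
    exact Submodule.zero_mem _
  · push Not at he
    exact monomial_mem_decomposableOrOffDegree hw hm he _

theorem linearCoeffs_surjective [Fintype σ] (w : σ → ℕ) (m : ℕ) :
    Function.Surjective (linearCoeffs R w m) := by
  classical
  intro v
  refine ⟨∑ i, monomial (Finsupp.single i.1 1) (v i), ?_⟩
  ext i
  simp [linearCoeffs, coeff_monomial, Finsupp.single_left_inj, ← Subtype.ext_iff]

namespace IsWeightedGradedEquiv

variable {w : σ → ℕ} {w' : τ → ℕ} {Ψ : MvPolynomial σ R ≃ₐ[R] MvPolynomial τ R}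

theorem map_decomposableOrOffDegree_le (hΨ : IsWeightedGradedEquiv w w' Ψ) (m : ℕ) :
    (decomposableOrOffDegree R w m).map Ψ.toLinearMap ≤ decomposableOrOffDegree R w' m := by
  rw [decomposableOrOffDegree, Submodule.map_span, Submodule.span_le]
  rintro _ ⟨p, hp | ⟨k, hk, hp⟩, rfl⟩
  · obtain ⟨j, k, q, r, hj, hk, hq, hr, rfl⟩ := hp
    exact Submodule.subset_span <| Or.inl ⟨j, k, Ψ q, Ψ r, hj, hk,
      hΨ.isWeightedHomogeneous hq, hΨ.isWeightedHomogeneous hr, map_mul Ψ q r⟩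
  · exact Submodule.subset_span <| Or.inr ⟨k, hk, hΨ.isWeightedHomogeneous hp⟩

theorem map_decomposableOrOffDegree (hΨ : IsWeightedGradedEquiv w w' Ψ) (m : ℕ) :
    (decomposableOrOffDegree R w m).map Ψ.toLinearMap = decomposableOrOffDegree R w' m := by
  refine le_antisymm (hΨ.map_decomposableOrOffDegree_le m) ?_
  intro p hp
  exact ⟨Ψ.symm p, hΨ.symm.map_decomposableOrOffDegree_le m ⟨p, hp, rfl⟩,
    Ψ.apply_symm_apply p⟩

end IsWeightedGradedEquiv

end Indecomposables

section Rank

variable (R) [CommRing R] [Fintype σ]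

def quotientDecomposableOrOffDegreeEquiv {w : σ → ℕ} (hw : ∀ i, 0 < w i) {m : ℕ} (hm : 0 < m) :
    (MvPolynomial σ R ⧸ decomposableOrOffDegree R w m) ≃ₗ[R] ({i // w i = m} → R) :=
  (Submodule.quotEquivOfEq _ _ (ker_linearCoeffs hw hm).symm).trans
    (LinearMap.quotKerEquivOfSurjective _ (linearCoeffs_surjective w m))

namespace IsWeightedGradedEquiv

variable {R} [Nontrivial R] [Fintype τ] {w : σ → ℕ} {w' : τ → ℕ}
  {Ψ : MvPolynomial σ R ≃ₐ[R] MvPolynomial τ R}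

theorem card_weight_eq (hw : ∀ i, 0 < w i) (hw' : ∀ i, 0 < w' i)
    (hΨ : IsWeightedGradedEquiv w w' Ψ) (m : ℕ) :
    Fintype.card {i // w i = m} = Fintype.card {i // w' i = m} := by
  rcases m.eq_zero_or_pos with rfl | hm
  · simp [(hw _).ne', (hw' _).ne']
  have e := Submodule.Quotient.equiv _ _ Ψ.toLinearEquiv (hΨ.map_decomposableOrOffDegree m)
  simpa using (((quotientDecomposableOrOffDegreeEquiv R hw hm).symm.trans e).trans
    (quotientDecomposableOrOffDegreeEquiv R hw' hm)).finrank_eq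

theorem map_univ_eq (hw : ∀ i, 0 < w i) (hw' : ∀ i, 0 < w' i)
    (hΨ : IsWeightedGradedEquiv w w' Ψ) :
    Finset.univ.val.map w = Finset.univ.val.map w' := by
  classical
  ext m
  simpa [Multiset.count_map, Fintype.card_subtype, eq_comm, Finset.card_def] using
    hΨ.card_weight_eq hw hw' m

end IsWeightedGradedEquiv

end Rank

end MvPolynomial

theorem map_quotPieces_symm {n : ℕ} {a a' : Fin (n + 2) → ℕ}
    {f f' : MvPolynomial (Fin (n + 2)) ℂ}
    (ψ : (MvPolynomial (Fin (n + 2)) ℂ ⧸ Ideal.span {f}) ≃ₐ[ℂ]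
      (MvPolynomial (Fin (n + 2)) ℂ ⧸ Ideal.span {f'}))
    (hψ : ∀ m, (quotPieces a f m).map ψ.toLinearMap = quotPieces a' f' m) (m : ℕ) :
    (quotPieces a' f' m).map ψ.symm.toLinearMap = quotPieces a f m :=
  (Submodule.map_symm_eq_iff ψ.toLinearEquiv).mpr (hψ m)

theorem exists_lift_of_map_quotPieces {n : ℕ} {a a' : Fin (n + 2) → ℕ}
    {f f' : MvPolynomial (Fin (n + 2)) ℂ}
    (ψ : (MvPolynomial (Fin (n + 2)) ℂ ⧸ Ideal.span {f}) ≃ₐ[ℂ]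
      (MvPolynomial (Fin (n + 2)) ℂ ⧸ Ideal.span {f'}))
    (hψ : ∀ m, (quotPieces a f m).map ψ.toLinearMap = quotPieces a' f' m)
    {s : MvPolynomial (Fin (n + 2)) ℂ} {m : ℕ} (hs : s.IsWeightedHomogeneous a m) :
    ∃ y : MvPolynomial (Fin (n + 2)) ℂ, y.IsWeightedHomogeneous a' m ∧
      Ideal.Quotient.mk _ y = ψ (Ideal.Quotient.mk _ s) := by
  obtain ⟨y, hy, hyψ⟩ : ψ (Ideal.Quotient.mk _ s) ∈ quotPieces a' f' m :=
    hψ m ▸ Submodule.mem_map_of_mem ⟨s, hs, rfl⟩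
  exact ⟨y, hy, hyψ⟩

theorem graded_iso_of_quotients_lifts_general {n : ℕ} (a a' : Fin (n + 2) → ℕ)
    (ha : ∀ i, 0 < a i) (ha' : ∀ i, 0 < a' i) (d d' : ℕ)
    (f f' : MvPolynomial (Fin (n + 2)) ℂ) (hf0 : f ≠ 0)
    (hfh : f.IsWeightedHomogeneous a d) (hfh' : f'.IsWeightedHomogeneous a' d')
    (hd : ∀ i, a i < d) (hd' : ∀ i, a' i < d')
    (ψ : (MvPolynomial (Fin (n + 2)) ℂ ⧸ Ideal.span {f}) ≃ₐ[ℂ]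
      (MvPolynomial (Fin (n + 2)) ℂ ⧸ Ideal.span {f'}))
    (hψ : ∀ m, (quotPieces a f m).map ψ.toLinearMap = quotPieces a' f' m) :
    Finset.univ.val.map a = Finset.univ.val.map a' ∧ d = d' ∧
    ∃ Ψ : MvPolynomial (Fin (n + 2)) ℂ ≃ₐ[ℂ] MvPolynomial (Fin (n + 2)) ℂ,
      (∀ m, (weightedHomogeneousSubmodule ℂ a m).map Ψ.toLinearMap
        = weightedHomogeneousSubmodule ℂ a' m) ∧
      (∃ c : ℂˣ, Ψ f = (c : ℂ) • f') ∧
      ∀ s : MvPolynomial (Fin (n + 2)) ℂ,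
        ψ (Ideal.Quotient.mk (Ideal.span {f}) s) = Ideal.Quotient.mk (Ideal.span {f'}) (Ψ s) := by
  obtain ⟨Ψ, hΨ, hΨψ⟩ := exists_isWeightedGradedEquiv_lift hfh hd hfh' hd' ψ
    (fun i => exists_lift_of_map_quotPieces ψ hψ (isWeightedHomogeneous_X ℂ a i))
    (fun i => exists_lift_of_map_quotPieces ψ.symm (map_quotPieces_symm ψ hψ)
      (isWeightedHomogeneous_X ℂ a' i))
  have hmem := Ideal.mem_iff_map_mem_of_lift ψ.toRingEquiv Ψ hΨψ
  obtain ⟨hdd', c, hc⟩ := hΨ.degree_eq_and_exists_smul ha' hf0 hfh hfh'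
    ((hmem f).mp (Ideal.mem_span_singleton_self f))
    ((hmem _).mpr (by simp))
  exact ⟨hΨ.map_univ_eq ha ha', hdd', Ψ, hΨ, ⟨c, hc⟩, hΨψ⟩

/-- A graded isomorphism `S/(f) ≃ S'/(f')` between quotients of weighted
polynomial rings by nonzero weighted-homogeneous elements of degrees exceeding all the
weights forces the weights to agree as multisets and the degrees to be equal, and it lifts
to a graded isomorphism `Ψ : S ≃ S'` with `Ψ(f) = c·f'` inducing `ψ` on the quotients. -/
theorem graded_iso_of_quotients_lifts {n : ℕ} (a a' : Fin (n + 2) → ℕ)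
    (ha : ∀ i, 0 < a i) (ha' : ∀ i, 0 < a' i) (d d' : ℕ)
    (f f' : MvPolynomial (Fin (n + 2)) ℂ) (hf0 : f ≠ 0) (hf0' : f' ≠ 0)
    (hfh : f.IsWeightedHomogeneous a d) (hfh' : f'.IsWeightedHomogeneous a' d')
    (hd : ∀ i, a i < d) (hd' : ∀ i, a' i < d')
    (ψ : (MvPolynomial (Fin (n + 2)) ℂ ⧸ Ideal.span {f}) ≃ₐ[ℂ]
      (MvPolynomial (Fin (n + 2)) ℂ ⧸ Ideal.span {f'}))
    (hψ : ∀ m, (quotPieces a f m).map ψ.toLinearMap = quotPieces a' f' m) :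
    Finset.univ.val.map a = Finset.univ.val.map a' ∧ d = d' ∧
    ∃ Ψ : MvPolynomial (Fin (n + 2)) ℂ ≃ₐ[ℂ] MvPolynomial (Fin (n + 2)) ℂ,
      (∀ m, (weightedHomogeneousSubmodule ℂ a m).map Ψ.toLinearMap
        = weightedHomogeneousSubmodule ℂ a' m) ∧
      (∃ c : ℂˣ, Ψ f = (c : ℂ) • f') ∧
      ∀ s : MvPolynomial (Fin (n + 2)) ℂ,
        ψ (Ideal.Quotient.mk (Ideal.span {f}) s) = Ideal.Quotient.mk (Ideal.span {f'}) (Ψ s) :=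
  graded_iso_of_quotients_lifts_general a a' ha ha' d d' f f' hf0 hfh hfh' hd hd' ψ hψ

end
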